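/- Let k be a field of characteristic zero and d ≥ 0 an integer. The space of regular functions f on SL₂(k) satisfying f(bg) = t^{-d} f(g) for all g ∈ SL₂ and all upper triangular b = [[t, x],[0, t^{-1}]], has dimension d + 1; moreover, the restriction of such f to the unipotent subgroup via u ↦ f(w·[[1,x],[0,1]]) (w the standard Weyl element) identifies this space with the polynomials in x of degree at most d. -/

import Mathlib

open Matrix

/-- The upper triangular element `[[t, x], [0, t⁻¹]]` of `SL₂(k)`. -/
noncomputable def borelElt (k : Type*) [Field k] (t : kˣ) (x : k) :
    Matrix.SpecialLinearGroup (Fin 2) k :=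
  ⟨!![(t : k), x; 0, ((t⁻¹ : kˣ) : k)], by
    simp [Matrix.det_fin_two_of]⟩

/-- The standard Weyl element `w = [[0, 1], [-1, 0]]` of `SL₂(k)`. -/
def weylElt (k : Type*) [Field k] : Matrix.SpecialLinearGroup (Fin 2) k :=
  ⟨!![0, 1; -1, 0], by simp [Matrix.det_fin_two_of]⟩

/-- The unipotent element `[[1, x], [0, 1]]` of `SL₂(k)`. -/
def unipElt (k : Type*) [Field k] (x : k) : Matrix.SpecialLinearGroup (Fin 2) k :=
  ⟨!![1, x; 0, 1], by simp [Matrix.det_fin_two_of]⟩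

/-- The space of regular (polynomial) functions `f` on `SL₂(k)` satisfying
`f(bg) = t^{-d} f(g)` for all upper triangular `b = [[t, x], [0, t⁻¹]]`. -/
noncomputable def borelWeilSpace (k : Type*) [Field k] (d : ℕ) :
    Submodule k (Matrix.SpecialLinearGroup (Fin 2) k → k) where
  carrier := {f |
    (∃ P : MvPolynomial (Fin 2 × Fin 2) k,
      ∀ g : Matrix.SpecialLinearGroup (Fin 2) k,
        f g = MvPolynomial.eval (fun p => (g : Matrix (Fin 2) (Fin 2) k) p.1 p.2) P) ∧
    ∀ (t : kˣ) (x : k) (g : Matrix.SpecialLinearGroup (Fin 2) k),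
      f (borelElt k t x * g) = ((t : k)⁻¹) ^ d * f g}
  add_mem' := by
    rintro f g ⟨⟨P, hP⟩, hf⟩ ⟨⟨Q, hQ⟩, hg⟩
    refine ⟨⟨P + Q, fun h => ?_⟩, fun t x h => ?_⟩
    · simp [hP h, hQ h]
    · simp only [Pi.add_apply, hf t x h, hg t x h]; ring
  zero_mem' := ⟨⟨0, by simp⟩, by simp⟩
  smul_mem' := by
    rintro c f ⟨⟨P, hP⟩, hf⟩
    refine ⟨⟨MvPolynomial.C c * P, fun h => ?_⟩, fun t x h => ?_⟩
    · simp [hP h]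
    · simp only [Pi.smul_apply, hf t x h, smul_eq_mul]; ring

/-!
The bottom-row monomial `g ↦ (-g₁₀)^{d-n} (-g₁₁)^n` is a section restricting to `x ↦ x^n` on
`w U`, so every polynomial of degree `≤ d` is a restriction. Conversely, every `g` with
`g₁₀ ≠ 0` factors as `b · w · u(g₁₁ / g₁₀)` with `b` upper triangular of diagonal `-g₁₀⁻¹`, so a
section satisfies `f g = (-g₁₀)^d F(g₁₁ / g₁₀)`, where `F` is its restriction to `w U`. As the
cell `g₁₀ ≠ 0` is Zariski dense and `k` is infinite, `f` is determined by `F`. Finally `F` is a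
polynomial, and `f [[1,0],[s,1]] = (-s)^d F(1/s)` is a polynomial in `s` as well, which forces
`deg F ≤ d`.
-/

open Polynomial
open scoped MatrixGroups

namespace Polynomial

variable {K : Type*} [Field K]

theorem eq_of_eval_eq_of_ne_zero [Infinite K] {p q : K[X]}
    (h : ∀ s ≠ 0, p.eval s = q.eval s) : p = q :=
  eq_of_infinite_eval_eq p q <| (Set.finite_singleton 0).infinite_compl.mono fun s hs => h s hs

theorem eval_reverse_of_ne_zero {s : K} (hs : s ≠ 0) (f : K[X]) :
    f.reverse.eval s = s ^ f.natDegree * f.eval s⁻¹ := by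
  let := invertibleOfNonzero (inv_ne_zero hs)
  have h := eval₂_reverse_mul_pow (RingHom.id K) s⁻¹ f
  rw [invOf_eq_inv, inv_inv, inv_pow] at h
  rw [eval, eval, ← h, mul_comm, inv_mul_cancel_right₀ (pow_ne_zero _ hs)]

theorem natDegree_le_of_eval_inv [Infinite K] {A B : K[X]} {d : ℕ}
    (h : ∀ s ≠ 0, s ^ d * B.eval s⁻¹ = A.eval s) : B.natDegree ≤ d := by
  by_contra! hlt
  have hrev : B.reverse = X ^ (B.natDegree - d) * A := eq_of_eval_eq_of_ne_zero fun s hs => by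
    rw [eval_reverse_of_ne_zero hs, eval_mul, eval_pow, eval_X, ← h s hs, ← mul_assoc, ← pow_add,
      Nat.sub_add_cancel hlt.le]
  have hlead : B.leadingCoeff = 0 := by
    rw [← coeff_zero_reverse, hrev, coeff_X_pow_mul', if_neg (by omega)]
  rw [leadingCoeff_eq_zero.mp hlead, natDegree_zero] at hlt
  exact Nat.not_lt_zero _ hlt

theorem finrank_degreeLE (n : ℕ) : Module.finrank K (degreeLE K n) = n + 1 := by
  rw [← degreeLT_succ_eq_degreeLE, (degreeLTEquiv K (n + 1)).finrank_eq, Module.finrank_fin_fun]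

theorem image_pi_leval_degreeLE (n : ℕ) :
    (LinearMap.pi fun x => leval x) '' (degreeLE K n : Set K[X]) =
      {F : K → K | ∃ P : K[X], P.natDegree ≤ n ∧ ∀ x, F x = P.eval x} := by
  ext F
  simp [mem_degreeLE, natDegree_le_iff_degree_le, funext_iff, eq_comm]

end Polynomial

theorem Submodule.finrank_eq_of_image_eq {R M N P : Type*} [Semiring R] [AddCommMonoid M]
    [Module R M] [AddCommMonoid N] [Module R N] [AddCommMonoid P] [Module R P]
    {V : Submodule R M} {W : Submodule R P} {f : M →ₗ[R] N} {e : P →ₗ[R] N}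
    (hf : Set.InjOn f V) (he : Function.Injective e) (h : f '' V = e '' W) :
    Module.finrank R V = Module.finrank R W := by
  have hfV : Function.Injective (f ∘ₗ V.subtype) := fun a b hab => Subtype.ext (hf a.2 b.2 hab)
  rw [← LinearMap.finrank_range_of_inj hfV,
    ← LinearMap.finrank_range_of_inj (f := e ∘ₗ W.subtype) (he.comp W.injective_subtype)]
  have hrange : LinearMap.range (f ∘ₗ V.subtype) = LinearMap.range (e ∘ₗ W.subtype) :=
    SetLike.coe_injective (by simpa [LinearMap.range_comp] using h)
  rw [hrange]

namespace BorelWeil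

variable {k : Type*} [Field k]

local notation:1024 "↑ₘ" A:1024 => ((A : SL(2, k)) : Matrix (Fin 2) (Fin 2) k)

attribute [local simp] Matrix.SpecialLinearGroup.coe_mul Matrix.SpecialLinearGroup.coe_transpose

def IsRegularFunction (f : SL(2, k) → k) : Prop :=
  ∃ P : MvPolynomial (Fin 2 × Fin 2) k, ∀ g, f g = MvPolynomial.eval (fun p => ↑ₘg p.1 p.2) P

theorem isRegularFunction_of_mem {d : ℕ} {f : SL(2, k) → k} (hf : f ∈ borelWeilSpace k d) :
    IsRegularFunction f :=
  hf.1

theorem IsRegularFunction.exists_polynomial_along {f : SL(2, k) → k} (hf : IsRegularFunction f)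
    (γ : k → SL(2, k)) (Γ : Matrix (Fin 2) (Fin 2) k[X]) (hγ : ∀ s, ↑ₘ(γ s) = Γ.map (eval s)) :
    ∃ q : k[X], ∀ s, f (γ s) = q.eval s := by
  obtain ⟨P, hP⟩ := hf
  refine ⟨MvPolynomial.aeval (fun p => Γ p.1 p.2) P, fun s => ?_⟩
  rw [hP, hγ]
  exact (MvPolynomial.comp_aeval_apply _ (aeval s) P).symm

@[simp]
theorem coe_borelElt (t : kˣ) (x : k) :
    ↑ₘ(borelElt k t x) = !![(t : k), x; 0, ((t⁻¹ : kˣ) : k)] :=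
  rfl

@[simp]
theorem coe_weylElt : ↑ₘ(weylElt k) = !![0, 1; -1, 0] :=
  rfl

@[simp]
theorem coe_unipElt (x : k) : ↑ₘ(unipElt k x) = !![1, x; 0, 1] :=
  rfl

theorem det_fin_two_eq_one (g : SL(2, k)) : ↑ₘg 0 0 * ↑ₘg 1 1 - ↑ₘg 0 1 * ↑ₘg 1 0 = 1 := by
  rw [← det_fin_two, g.det_coe]

theorem borelElt_mul_weylElt_mul_unipElt {g : SL(2, k)} (hc : ↑ₘg 1 0 ≠ 0) :
    borelElt k (Units.mk0 (-(↑ₘg 1 0)⁻¹) (by simpa using hc)) (-↑ₘg 0 0) *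
      (weylElt k * unipElt k (↑ₘg 1 1 / ↑ₘg 1 0)) = g := by
  have hdet := det_fin_two_eq_one g
  ext i j
  fin_cases i <;> fin_cases j <;> simp [Matrix.mul_apply]
  · field_simp
    linear_combination hdet
  · field_simp

def restrictBigCell : (SL(2, k) → k) →ₗ[k] (k → k) where
  toFun f x := f (weylElt k * unipElt k x)
  map_add' _ _ := rfl
  map_smul' _ _ := rfl

theorem restrictBigCell_apply (f : SL(2, k) → k) (x : k) :
    restrictBigCell f x = f (weylElt k * unipElt k x) :=
  rfl

theorem apply_eq_of_mem_borelWeilSpace {d : ℕ} {f : SL(2, k) → k} (hf : f ∈ borelWeilSpace k d)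
    {g : SL(2, k)} (hc : ↑ₘg 1 0 ≠ 0) :
    f g = (-↑ₘg 1 0) ^ d * restrictBigCell f (↑ₘg 1 1 / ↑ₘg 1 0) := by
  conv_lhs => rw [← borelElt_mul_weylElt_mul_unipElt hc]
  rw [hf.2, Units.val_mk0, inv_neg, inv_inv]
  rfl

theorem IsRegularFunction.eq_zero_of_eq_zero_on_bigCell [Infinite k] {f : SL(2, k) → k}
    (hf : IsRegularFunction f) (h : ∀ g : SL(2, k), ↑ₘg 1 0 ≠ 0 → f g = 0) : f = 0 := by
  funext g
  by_cases hc : ↑ₘg 1 0 ≠ 0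
  · exact h g hc
  rw [not_ne_iff] at hc
  have hd : ↑ₘg 1 1 ≠ 0 := fun hd => by simpa [hc, hd] using det_fin_two_eq_one g
  obtain ⟨q, hq⟩ := hf.exists_polynomial_along (fun s => g * (unipElt k s).transpose)
    (g.1.map C * !![1, 0; X, 1]) fun s => by
      ext i j; fin_cases i <;> fin_cases j <;> simp [Matrix.mul_apply]
  have hq0 : q = 0 := eq_of_eval_eq_of_ne_zero fun s hs => by
    rw [← hq, eval_zero]
    exact h _ (by simpa [Matrix.mul_apply, hc] using mul_ne_zero hd hs)
  have hg : g * (unipElt k 0).transpose = g := by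
    ext i j; fin_cases i <;> fin_cases j <;> simp [Matrix.mul_apply]
  simpa [hg, hq0] using hq 0

theorem exists_natDegree_le_restrictBigCell_eq [Infinite k] {d : ℕ} {f : SL(2, k) → k}
    (hf : f ∈ borelWeilSpace k d) :
    ∃ B : k[X], B.natDegree ≤ d ∧ ∀ x, restrictBigCell f x = B.eval x := by
  obtain ⟨B, hB⟩ := (isRegularFunction_of_mem hf).exists_polynomial_along
    (fun x => weylElt k * unipElt k x) !![0, 1; -1, -X] fun x => by
      ext i j; fin_cases i <;> fin_cases j <;> simp [Matrix.mul_apply]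
  obtain ⟨A, hA⟩ := (isRegularFunction_of_mem hf).exists_polynomial_along
    (fun s => (unipElt k s).transpose) !![1, 0; X, 1] fun s => by
      ext i j; fin_cases i <;> fin_cases j <;> simp
  refine ⟨B, natDegree_le_of_eval_inv (A := C ((-1) ^ d) * A) fun s hs => ?_, hB⟩
  have hcell := apply_eq_of_mem_borelWeilSpace hf (g := (unipElt k s).transpose)
    (by simpa using hs)
  simp only [Matrix.SpecialLinearGroup.coe_transpose, coe_unipElt, transpose_apply, of_apply,
    cons_val', cons_val_zero, cons_val_one] at hcell
  rw [eval_mul, eval_C, ← hA, hcell, ← mul_assoc, ← mul_pow, neg_one_mul, neg_neg, one_div]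
  exact congrArg _ (hB s⁻¹).symm

def bottomRowMonomial (d n : ℕ) (g : SL(2, k)) : k :=
  (-↑ₘg 1 0) ^ (d - n) * (-↑ₘg 1 1) ^ n

theorem bottomRowMonomial_mem {d n : ℕ} (hn : n ≤ d) :
    bottomRowMonomial d n ∈ borelWeilSpace k d := by
  refine ⟨⟨(-MvPolynomial.X (1, 0)) ^ (d - n) * (-MvPolynomial.X (1, 1)) ^ n,
    fun g => by simp [bottomRowMonomial]⟩, fun t x g => ?_⟩
  have hrow : ∀ j, ↑ₘ(borelElt k t x * g) 1 j = (t : k)⁻¹ * ↑ₘg 1 j := fun j => by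
    simp [Matrix.mul_apply]
  simp only [bottomRowMonomial, hrow, ← mul_neg, mul_pow]
  rw [mul_mul_mul_comm, ← pow_add, Nat.sub_add_cancel hn]

theorem restrictBigCell_bottomRowMonomial (d n : ℕ) (x : k) :
    restrictBigCell (bottomRowMonomial d n) x = x ^ n := by
  simp [restrictBigCell_apply, bottomRowMonomial, Matrix.mul_apply]

theorem exists_mem_restrictBigCell_eq {d : ℕ} {P : k[X]} (hP : P.natDegree ≤ d) :
    ∃ f ∈ borelWeilSpace k d, ∀ x, restrictBigCell f x = P.eval x := by
  refine ⟨∑ n ∈ Finset.range (d + 1), P.coeff n • bottomRowMonomial d n,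
    Submodule.sum_mem _ fun n hn => Submodule.smul_mem _ _
      (bottomRowMonomial_mem (Finset.mem_range_succ_iff.mp hn)), fun x => ?_⟩
  simp only [map_sum, map_smul, Finset.sum_apply, Pi.smul_apply, smul_eq_mul,
    restrictBigCell_bottomRowMonomial, eval_eq_sum_range' (Nat.lt_succ_of_le hP)]

theorem injOn_restrictBigCell [Infinite k] (d : ℕ) :
    Set.InjOn restrictBigCell (borelWeilSpace k d : Set (SL(2, k) → k)) := by
  intro f hf h hh hfh
  have hsub := sub_mem hf hh
  rw [← sub_eq_zero]
  refine (isRegularFunction_of_mem hsub).eq_zero_of_eq_zero_on_bigCell fun g hc => ?_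
  rw [apply_eq_of_mem_borelWeilSpace hsub hc, map_sub, hfh, sub_self, Pi.zero_apply, mul_zero]

theorem image_restrictBigCell [Infinite k] (d : ℕ) :
    restrictBigCell '' (borelWeilSpace k d : Set (SL(2, k) → k)) =
      {F | ∃ P : k[X], P.natDegree ≤ d ∧ ∀ x, F x = P.eval x} := by
  ext F
  constructor
  · rintro ⟨f, hf, rfl⟩
    exact exists_natDegree_le_restrictBigCell_eq hf
  · rintro ⟨P, hP, hF⟩
    obtain ⟨f, hf, hfP⟩ := exists_mem_restrictBigCell_eq hP
    exact ⟨f, hf, funext fun x => (hfP x).trans (hF x).symm⟩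

end BorelWeil

/-- Borel–Weil for `SL₂`: in characteristic zero, the space of regular functions on `SL₂(k)`
with `f(bg) = t^{-d} f(g)` for upper triangular `b` has dimension `d + 1`; moreover the
restriction `f ↦ (x ↦ f(w·[[1,x],[0,1]]))` is injective on this space and identifies it with
the polynomials in `x` of degree at most `d`. -/
theorem stmt6 (k : Type*) [Field k] [CharZero k] (d : ℕ) :
    Module.finrank k (borelWeilSpace k d) = d + 1 ∧
    Set.InjOn
      (fun f : Matrix.SpecialLinearGroup (Fin 2) k → k =>
        fun x : k => f (weylElt k * unipElt k x))
      (borelWeilSpace k d) ∧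
    ((fun f : Matrix.SpecialLinearGroup (Fin 2) k → k =>
        fun x : k => f (weylElt k * unipElt k x)) '' (borelWeilSpace k d) =
      {F : k → k | ∃ P : Polynomial k, P.natDegree ≤ d ∧ ∀ x, F x = P.eval x}) := by
  refine ⟨?_, BorelWeil.injOn_restrictBigCell d, BorelWeil.image_restrictBigCell d⟩
  rw [← finrank_degreeLE (K := k) d]
  refine Submodule.finrank_eq_of_image_eq (e := LinearMap.pi fun x => leval x)
    (BorelWeil.injOn_restrictBigCell d) (fun P Q h => Polynomial.funext fun x => congrFun h x) ?_
  rw [BorelWeil.image_restrictBigCell, image_pi_leval_degreeLE]
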